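/- arXiv:2506.18498 — 3 statements merged into one kernel-verified Lean document; each statement's English description precedes it below -/
import Mathlib

section
/- Let dX, dY be positive integers and let Σ₀ be a real symmetric positive semidefinite (dX+dY)×(dX+dY) matrix with det Σ₀ = 0 but whose two diagonal blocks (Σ₀)_X (of size dX×dX) and (Σ₀)_Y (of size dY×dY) are positive definite. Then the function f(Σ) = log( det Σ_X · det Σ_Y ) − log det Σ, defined on positive definite (dX+dY)×(dX+dY) matrices Σ with diagonal blocks Σ_X, Σ_Y, tends to +∞ as Σ → Σ₀ within the set of positive definite matrices; that is, f tends to atTop along the filter of neighbourhoods of Σ₀ restricted to positive definite matrices. -/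
open Matrix Filter Topology

/-- If `S0` is a symmetric positive semidefinite matrix with `det S0 = 0` but
positive definite diagonal blocks, then `f(Σ) = log (det Σ_X · det Σ_Y) - log det Σ` tends to
`+∞` as `Σ → S0` within the set of positive definite matrices. -/
theorem statement3 (dX dY : ℕ) (hdX : 0 < dX) (hdY : 0 < dY)
    (S0 : Matrix (Fin dX ⊕ Fin dY) (Fin dX ⊕ Fin dY) ℝ)
    (hsymm : S0.IsSymm) (hpsd : S0.PosSemidef) (hdet : S0.det = 0)
    (hX : S0.toBlocks₁₁.PosDef) (hY : S0.toBlocks₂₂.PosDef) :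
    Filter.Tendsto
      (fun M : Matrix (Fin dX ⊕ Fin dY) (Fin dX ⊕ Fin dY) ℝ =>
        Real.log (M.toBlocks₁₁.det * M.toBlocks₂₂.det) - Real.log M.det)
      (𝓝[{M : Matrix (Fin dX ⊕ Fin dY) (Fin dX ⊕ Fin dY) ℝ | M.PosDef}] S0)
      Filter.atTop := by
  have hcont : Continuous fun M : Matrix (Fin dX ⊕ Fin dY) (Fin dX ⊕ Fin dY) ℝ =>
      M.toBlocks₁₁.det * M.toBlocks₂₂.det :=
    ((continuous_id.matrix_submatrix _ _).matrix_det).mul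
      ((continuous_id.matrix_submatrix _ _).matrix_det)
  have hprodpos : 0 < S0.toBlocks₁₁.det * S0.toBlocks₂₂.det :=
    mul_pos hX.det_pos hY.det_pos
  have h1 : Tendsto (fun M : Matrix (Fin dX ⊕ Fin dY) (Fin dX ⊕ Fin dY) ℝ =>
      Real.log (M.toBlocks₁₁.det * M.toBlocks₂₂.det))
      (𝓝[{M : Matrix (Fin dX ⊕ Fin dY) (Fin dX ⊕ Fin dY) ℝ | M.PosDef}] S0)
      (𝓝 (Real.log (S0.toBlocks₁₁.det * S0.toBlocks₂₂.det))) := by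
    exact (Real.continuousAt_log hprodpos.ne').tendsto.comp
        ((hcont.tendsto S0).mono_left nhdsWithin_le_nhds)
  have hdetT : Tendsto (fun M : Matrix (Fin dX ⊕ Fin dY) (Fin dX ⊕ Fin dY) ℝ => M.det)
      (𝓝[{M : Matrix (Fin dX ⊕ Fin dY) (Fin dX ⊕ Fin dY) ℝ | M.PosDef}] S0)
      (𝓝[>] (0 : ℝ)) := by
    apply tendsto_nhdsWithin_of_tendsto_nhds_of_eventually_within
    · have := (continuous_id.matrix_det).tendsto S0
      simpa [hdet] using this.mono_left nhdsWithin_le_nhds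
    · exact eventually_nhdsWithin_of_forall fun M hM => hM.det_pos
  have h2 : Tendsto (fun M : Matrix (Fin dX ⊕ Fin dY) (Fin dX ⊕ Fin dY) ℝ =>
      Real.log M.det)
      (𝓝[{M : Matrix (Fin dX ⊕ Fin dY) (Fin dX ⊕ Fin dY) ℝ | M.PosDef}] S0)
      atBot := Real.tendsto_log_nhdsGT_zero.comp hdetT
  simpa [sub_eq_add_neg] using h1.add_atTop (tendsto_neg_atBot_atTop.comp h2)
end

section
/- Let n be a positive integer and let Σ, S, Y be positive definite real n×n matrices such that Σ − S is positive definite. Then trace(S⁻¹·Y·S⁻¹·Y) > trace(Σ⁻¹·Y·Σ⁻¹·Y). -/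
/-!
Put `A = Σ⁻¹` and `B = S⁻¹`. Cyclicity of the trace gives
`tr (B Y B Y) - tr (A Y A Y) = tr ((B - A) · Y (A + B) Y)`.
Inversion is strictly antitone on positive definite matrices, so `B - A` is positive definite, and
so is the congruence `Y (A + B) Y`. Finally the trace of a product `P Q` of positive definite
matrices is positive: writing `P = C⋆ C` with `C` invertible, it is the trace of the positive
definite matrix `C Q C⋆`.
-/

open Matrix
open scoped ComplexOrder

namespace Matrix

theorem trace_mul_mul_mul_sub_eq {R n : Type*} [CommRing R] [Fintype n] (A B Y : Matrix n n R) :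
    (B * Y * B * Y).trace - (A * Y * A * Y).trace = ((B - A) * (Y * (A + B) * Y)).trace := by
  have hcyc : (B * Y * A * Y).trace = (A * Y * B * Y).trace := by
    rw [Matrix.mul_assoc (B * Y), trace_mul_comm, ← Matrix.mul_assoc]
  simp only [Matrix.sub_mul, Matrix.mul_add, Matrix.add_mul, Matrix.mul_assoc, trace_sub, trace_add]
  simp only [← Matrix.mul_assoc] at hcyc ⊢
  rw [hcyc]
  ring

variable {𝕜 : Type*} [RCLike 𝕜] {n : Type*} [Fintype n] [DecidableEq n]

open scoped MatrixOrder in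
theorem PosDef.trace_mul_pos [Nonempty n] {P Q : Matrix n n 𝕜} (hP : P.PosDef) (hQ : Q.PosDef) :
    0 < (P * Q).trace := by
  obtain ⟨C, rfl⟩ := CStarAlgebra.nonneg_iff_eq_star_mul_self.mp hP.posSemidef.nonneg
  have hC : IsUnit C := isUnit_of_mul_isUnit_right hP.isUnit
  have hCQC : (C * Q * star C).PosDef := (IsUnit.posDef_star_right_conjugate_iff hC).mpr hQ
  rw [Matrix.mul_assoc, trace_mul_comm, Matrix.mul_assoc, ← Matrix.mul_assoc]
  exact hCQC.trace_pos

theorem PosDef.posDef_inv_sub_inv {Sig S : Matrix n n 𝕜} (hSig : Sig.PosDef) (hS : S.PosDef)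
    (hdiff : (Sig - S).PosDef) : (S⁻¹ - Sig⁻¹).PosDef := by
  let _ := hS.isUnit.invertible
  let _ := hSig.isUnit.invertible
  set D := Sig - S
  -- a sum of two congruences `X * M * star X` with `M` positive definite and `X` invertible
  have hdecomp : S⁻¹ - Sig⁻¹ = Sig⁻¹ * D * star Sig⁻¹ + (Sig⁻¹ * D) * S⁻¹ * star (Sig⁻¹ * D) := by
    rw [star_mul, star_eq_conjTranspose, star_eq_conjTranspose, hSig.inv.1, hdiff.1]
    simp only [D, Matrix.mul_sub, Matrix.sub_mul, Matrix.mul_assoc, mul_inv_of_invertible,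
      inv_mul_of_invertible, inv_mul_cancel_left_of_invertible, Matrix.mul_one, Matrix.one_mul]
    abel
  rw [hdecomp]
  exact ((IsUnit.posDef_star_right_conjugate_iff hSig.inv.isUnit).mpr hdiff).add
    ((IsUnit.posDef_star_right_conjugate_iff (hSig.inv.isUnit.mul hdiff.isUnit)).mpr hS.inv)

theorem PosDef.trace_mul_mul_mul_lt [Nonempty n] {A B Y : Matrix n n 𝕜} (hA : A.PosDef)
    (hB : B.PosDef) (hBA : (B - A).PosDef) (hY : Y.IsHermitian) (hYu : IsUnit Y) :
    (A * Y * A * Y).trace < (B * Y * B * Y).trace := by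
  have hYABY : (Y * (A + B) * star Y).PosDef :=
    (IsUnit.posDef_star_right_conjugate_iff hYu).mpr (hA.add hB)
  rw [star_eq_conjTranspose, hY.eq] at hYABY
  rw [← sub_pos, trace_mul_mul_mul_sub_eq]
  exact hBA.trace_mul_pos hYABY

end Matrix

/-- For positive definite real `n×n` matrices `Sig, S, Y` with `Sig - S`
positive definite, `trace (S⁻¹·Y·S⁻¹·Y) > trace (Sig⁻¹·Y·Sig⁻¹·Y)`. -/
theorem statement8 (n : ℕ) (hn : 0 < n) (Sig S Y : Matrix (Fin n) (Fin n) ℝ)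
    (hSig : Sig.PosDef) (hS : S.PosDef) (hY : Y.PosDef) (hdiff : (Sig - S).PosDef) :
    (Sig⁻¹ * Y * Sig⁻¹ * Y).trace < (S⁻¹ * Y * S⁻¹ * Y).trace := by
  have : NeZero n := ⟨hn.ne'⟩
  exact hSig.inv.trace_mul_mul_mul_lt hS.inv (hSig.posDef_inv_sub_inv hS hdiff) hY.isHermitian
    hY.isUnit
end

section
/- Let dX, dY be positive integers. For a positive definite real (dX+dY)×(dX+dY) matrix Σ = [[Σ_X, Aᵀ],[A, Σ_Y]], define its pairwise data as the triple (diag Σ_X, diag Σ_Y, A) and define I(Σ) = (1/2)·log( det Σ_X · det Σ_Y / det Σ ). Let Δ_P(Σ) denote the set of positive definite matrices with the same pairwise data as Σ. Suppose W is a real-valued function on positive definite (dX+dY)×(dX+dY) matrices satisfying: (i) W(Σ) = W(Σ') whenever Σ and Σ' have the same pairwise data; (ii) W(Σ) ≥ 0 and I(Σ) − W(Σ) ≥ 0 for every Σ; and (iii) for every Σ there exists a positive definite Σ* with the same pairwise data as Σ such that I(Σ*) = W(Σ*). Then for every positive definite Σ, W(Σ) equals the infimum of I over Δ_P(Σ),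 this infimum is attained, and consequently I(Σ) − W(Σ) = I(Σ) − min_{Σ' ∈ Δ_P(Σ)} I(Σ'). -/
open Matrix

/-- If `W` is a function on positive definite covariance matrices that
(i) depends only on the pairwise data (diagonals of both marginal blocks and the cross
block), (ii) satisfies `0 ≤ W ≤ I` where `I` is the Gaussian mutual information, and
(iii) for every `M` there is a matrix with the same pairwise data on which `I = W`, then
for every positive definite `M`, `W M` is the attained infimum (least element) of `I` over
the set `Δ_P(M)` of positive definite matrices with the same pairwise data, and hence
`I M - W M = I M - min_{N ∈ Δ_P(M)} I N`. -/
theorem statement10 (dX dY : ℕ) (hdX : 0 < dX) (hdY : 0 < dY)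
    (pd : Matrix (Fin dX ⊕ Fin dY) (Fin dX ⊕ Fin dY) ℝ →
      (Fin dX → ℝ) × (Fin dY → ℝ) × Matrix (Fin dY) (Fin dX) ℝ)
    (hpd : pd = fun M =>
      (fun i => M.toBlocks₁₁ i i, fun j => M.toBlocks₂₂ j j, M.toBlocks₂₁))
    (I : Matrix (Fin dX ⊕ Fin dY) (Fin dX ⊕ Fin dY) ℝ → ℝ)
    (hI : I = fun M => (1 / 2) * Real.log (M.toBlocks₁₁.det * M.toBlocks₂₂.det / M.det))
    (W : Matrix (Fin dX ⊕ Fin dY) (Fin dX ⊕ Fin dY) ℝ → ℝ)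
    (hW1 : ∀ M N, M.PosDef → N.PosDef → pd M = pd N → W M = W N)
    (hW2 : ∀ M, M.PosDef → 0 ≤ W M ∧ 0 ≤ I M - W M)
    (hW3 : ∀ M, M.PosDef → ∃ N, N.PosDef ∧ pd N = pd M ∧ I N = W N) :
    ∀ M, M.PosDef →
      IsLeast (I '' {N | N.PosDef ∧ pd N = pd M}) (W M) ∧
      I M - W M = I M - sInf (I '' {N | N.PosDef ∧ pd N = pd M}) := by
  intro M hM
  obtain ⟨N, hN, hpdN, hIN⟩ := hW3 M hM
  have hWM : W M = W N := hW1 M N hM hN hpdN.symm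
  have hleast : IsLeast (I '' {N | N.PosDef ∧ pd N = pd M}) (W M) := by
    constructor
    · exact ⟨N, ⟨hN, hpdN⟩, by rw [hIN, hWM]⟩
    · rintro x ⟨N', ⟨hN', hpdN'⟩, rfl⟩
      have := (hW2 N' hN').2
      have hW' : W M = W N' := hW1 M N' hM hN' hpdN'.symm
      linarith
  refine ⟨hleast, ?_⟩
  rw [hleast.csInf_eq]
end
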